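/- Consider a commutative cube in Graph whose top and bottom squares are pushouts of inclusions (L_0 ↪ I_0 pushed out along μ_0: L_0 → S_0 giving D_0, and L_i ↪ I_i pushed out along μ_i: L_i → S_{f(i)} giving D_{f(i)}), and whose left and back squares are pullbacks, with all vertical-chain morphisms inclusions. Then the unique mediating morphism D_{f(i)} → D_0 induced by the universal property of the bottom pushout makes the front and right squares pullbacks, and this mediating morphism is itself an inclusion, namely the sum of the inclusions S_{f(i)} ↪ S_0 and (I_i \ L_i) ↪ (I_0 \ L_0). -/

import Mathlib

/-- A directed multigraph. -/
structure MGraph where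
  N : Type
  A : Type
  src : A → N
  tgt : A → N

/-- A (total) graph homomorphism. -/
structure GraphHom (G H : MGraph) where
  fN : G.N → H.N
  fA : G.A → H.A
  src_comm : ∀ a, H.src (fA a) = fN (G.src a)
  tgt_comm : ∀ a, H.tgt (fA a) = fN (G.tgt a)

/-- A subgraph, given by node and arrow sets closed under source and target. -/
structure Subgraph (G : MGraph) where
  nodes : Set G.N
  arrows : Set G.A
  src_mem : ∀ a ∈ arrows, G.src a ∈ nodes
  tgt_mem : ∀ a ∈ arrows, G.tgt a ∈ nodes

/-- The graph realizing a subgraph. -/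
def Subgraph.toGraph {G : MGraph} (X : Subgraph G) : MGraph where
  N := {x // x ∈ X.nodes}
  A := {a // a ∈ X.arrows}
  src := fun a => ⟨G.src a.1, X.src_mem a.1 a.2⟩
  tgt := fun a => ⟨G.tgt a.1, X.tgt_mem a.1 a.2⟩

/-- Subgraph inclusion order. -/
def Subgraph.le {G : MGraph} (X Y : Subgraph G) : Prop :=
  X.nodes ⊆ Y.nodes ∧ X.arrows ⊆ Y.arrows

/-- Intersection of subgraphs. -/
def Subgraph.inter {G : MGraph} (X Y : Subgraph G) : Subgraph G where
  nodes := X.nodes ∩ Y.nodes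
  arrows := X.arrows ∩ Y.arrows
  src_mem := fun a ha => ⟨X.src_mem a ha.1, Y.src_mem a ha.2⟩
  tgt_mem := fun a ha => ⟨X.tgt_mem a ha.1, Y.tgt_mem a ha.2⟩

/-- The full subgraph. -/
def Subgraph.top (G : MGraph) : Subgraph G :=
  ⟨Set.univ, Set.univ, fun _ _ => trivial, fun _ _ => trivial⟩

/-- A partial graph homomorphism `G ⇀ H`: a subgraph `dom ⊑ G` (the domain of
definition) together with a total graph homomorphism `dom → H`. -/
structure PGraphHom (G H : MGraph) where
  dom : Subgraph G
  fN : ∀ x, x ∈ dom.nodes → H.N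
  fA : ∀ a, a ∈ dom.arrows → H.A
  src_comm : ∀ a (ha : a ∈ dom.arrows),
    H.src (fA a ha) = fN (G.src a) (dom.src_mem a ha)
  tgt_comm : ∀ a (ha : a ∈ dom.arrows),
    H.tgt (fA a ha) = fN (G.tgt a) (dom.tgt_mem a ha)

/-- A partial graph homomorphism is total if its domain of definition is everything. -/
def PGraphHom.Total {G H : MGraph} (φ : PGraphHom G H) : Prop :=
  φ.dom.nodes = Set.univ ∧ φ.dom.arrows = Set.univ

theorem PGraphHom.fN_congr {G H : MGraph} (φ : PGraphHom G H) {x y : G.N}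
    (hx : x ∈ φ.dom.nodes) (hy : y ∈ φ.dom.nodes) (h : x = y) :
    φ.fN x hx = φ.fN y hy := by subst h; rfl

/-- Domain of definition of the composite: the preimage of `dom ψ` under `φ`. -/
def PGraphHom.domComp {G H K : MGraph} (φ : PGraphHom G H) (ψ : PGraphHom H K) :
    Subgraph G where
  nodes := {x | ∃ h : x ∈ φ.dom.nodes, φ.fN x h ∈ ψ.dom.nodes}
  arrows := {a | ∃ h : a ∈ φ.dom.arrows, φ.fA a h ∈ ψ.dom.arrows}
  src_mem := fun a ha => ⟨φ.dom.src_mem a ha.choose, by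
    rw [← φ.src_comm a ha.choose]
    exact ψ.dom.src_mem _ ha.choose_spec⟩
  tgt_mem := fun a ha => ⟨φ.dom.tgt_mem a ha.choose, by
    rw [← φ.tgt_comm a ha.choose]
    exact ψ.dom.tgt_mem _ ha.choose_spec⟩

/-- Composition of partial graph homomorphisms. -/
def PGraphHom.comp {G H K : MGraph} (φ : PGraphHom G H) (ψ : PGraphHom H K) :
    PGraphHom G K where
  dom := φ.domComp ψ
  fN := fun x hx => ψ.fN (φ.fN x hx.choose) hx.choose_spec
  fA := fun a ha => ψ.fA (φ.fA a ha.choose) ha.choose_spec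
  src_comm := fun a ha =>
    (ψ.src_comm _ ha.choose_spec).trans
      (ψ.fN_congr _ _ (φ.src_comm a ha.choose))
  tgt_comm := fun a ha =>
    (ψ.tgt_comm _ ha.choose_spec).trans
      (ψ.fN_congr _ _ (φ.tgt_comm a ha.choose))

/-- The order `φ ⪯ ψ`: `dom φ ⊑ dom ψ` and agreement on `dom φ`. -/
def PGraphHom.le {G H : MGraph} (φ ψ : PGraphHom G H) : Prop :=
  φ.dom.le ψ.dom ∧
  (∀ x (hx : x ∈ φ.dom.nodes) (hx' : x ∈ ψ.dom.nodes), φ.fN x hx = ψ.fN x hx') ∧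
  (∀ a (ha : a ∈ φ.dom.arrows) (ha' : a ∈ ψ.dom.arrows), φ.fA a ha = ψ.fA a ha')

/-- Regarding a total graph homomorphism as a partial one. -/
def GraphHom.toP {G H : MGraph} (f : GraphHom G H) : PGraphHom G H where
  dom := Subgraph.top G
  fN := fun x _ => f.fN x
  fA := fun a _ => f.fA a
  src_comm := fun a _ => f.src_comm a
  tgt_comm := fun a _ => f.tgt_comm a

/-- Composition of total graph homomorphisms. -/
def GraphHom.comp {G H K : MGraph} (f : GraphHom G H) (g : GraphHom H K) :
    GraphHom G K where
  fN := fun x => g.fN (f.fN x)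
  fA := fun a => g.fA (f.fA a)
  src_comm := fun a => (g.src_comm _).trans (congrArg g.fN (f.src_comm a))
  tgt_comm := fun a => (g.tgt_comm _).trans (congrArg g.fN (f.tgt_comm a))

noncomputable section PushoutConstruction

attribute [local instance] Classical.propDecidable

variable (H : MGraph) (Gsub : Subgraph H) (K : MGraph)
variable (ψ : GraphHom (Subgraph.toGraph Gsub) K)

/-- Nodes of the pushout `P = K + (H \ G)`. -/
def pushNodes := K.N ⊕ {x : H.N // x ∉ Gsub.nodes}

/-- Arrows of the pushout `P = K + (H \ G)`. -/
def pushArrows := K.A ⊕ {a : H.A // a ∉ Gsub.arrows}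

/-- The node map of `ψ* = ψ + id_{H∖G} : H → P`. -/
def pushMapN (x : H.N) : pushNodes H Gsub K :=
  if h : x ∈ Gsub.nodes then Sum.inl (ψ.fN ⟨x, h⟩) else Sum.inr ⟨x, h⟩

/-- The arrow map of `ψ* = ψ + id_{H∖G} : H → P`. -/
def pushMapA (a : H.A) : pushArrows H Gsub K :=
  if h : a ∈ Gsub.arrows then Sum.inl (ψ.fA ⟨a, h⟩) else Sum.inr ⟨a, h⟩

/-- The pushout graph `P = K + (H \ G)`, with sources and targets as in the
explicit construction. -/
def Push : MGraph where
  N := pushNodes H Gsub K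
  A := pushArrows H Gsub K
  src := fun a => match a with
    | Sum.inl e => Sum.inl (K.src e)
    | Sum.inr a => pushMapN H Gsub K ψ (H.src a.1)
  tgt := fun a => match a with
    | Sum.inl e => Sum.inl (K.tgt e)
    | Sum.inr a => pushMapN H Gsub K ψ (H.tgt a.1)

/-- The inclusion `φ* : K ↪ P`. -/
def pushInl : GraphHom K (Push H Gsub K ψ) where
  fN := Sum.inl
  fA := Sum.inl
  src_comm := fun _ => rfl
  tgt_comm := fun _ => rfl

/-- The homomorphism `ψ* : H → P`, given by `ψ` on `G` and the identity on `H ∖ G`. -/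
def pushMap : GraphHom H (Push H Gsub K ψ) where
  fN := pushMapN H Gsub K ψ
  fA := pushMapA H Gsub K ψ
  src_comm := fun a => by
    unfold pushMapA
    by_cases h : a ∈ Gsub.arrows
    · erw [dif_pos h]
      have hs : H.src a ∈ Gsub.nodes := Gsub.src_mem a h
      unfold pushMapN
      erw [dif_pos hs]
      exact congrArg Sum.inl (ψ.src_comm ⟨a, h⟩)
    · erw [dif_neg h]
      rfl
  tgt_comm := fun a => by
    unfold pushMapA
    by_cases h : a ∈ Gsub.arrows
    · erw [dif_pos h]
      have hs : H.tgt a ∈ Gsub.nodes := Gsub.tgt_mem a h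
      unfold pushMapN
      erw [dif_pos hs]
      exact congrArg Sum.inl (ψ.tgt_comm ⟨a, h⟩)
    · erw [dif_neg h]
      rfl

/-- The inclusion graph homomorphism `G ↪ H`. -/
def subIncl : GraphHom (Subgraph.toGraph Gsub) H where
  fN := Subtype.val
  fA := Subtype.val
  src_comm := fun _ => rfl
  tgt_comm := fun _ => rfl

end PushoutConstruction

section Cube

variable (I0 : MGraph) (Lsub Ii : Subgraph I0) (S0 : MGraph)
variable (μ0 : GraphHom (Subgraph.toGraph Lsub) S0) (Sfi : Subgraph S0)

/-- The subgraph `L_i = L_0 ∩ I_i`, realized as a subgraph of `I_i`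
(the back square of the cube is a pullback). -/
def liftL : Subgraph (Subgraph.toGraph Ii) where
  nodes := {x | x.1 ∈ Lsub.nodes}
  arrows := {a | a.1 ∈ Lsub.arrows}
  src_mem := fun a ha => Lsub.src_mem a.1 ha
  tgt_mem := fun a ha => Lsub.tgt_mem a.1 ha

variable (hleftN : ∀ x (hx : x ∈ Lsub.nodes), x ∈ Ii.nodes ↔ μ0.fN ⟨x, hx⟩ ∈ Sfi.nodes)
variable (hleftA : ∀ a (ha : a ∈ Lsub.arrows), a ∈ Ii.arrows ↔ μ0.fA ⟨a, ha⟩ ∈ Sfi.arrows)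

/-- The restriction `μ_i : L_i → S_{f(i)}` of `μ_0` (the left square of the
cube is a pullback). -/
def μi : GraphHom (Subgraph.toGraph (liftL I0 Lsub Ii)) (Subgraph.toGraph Sfi) where
  fN := fun x => ⟨μ0.fN ⟨x.1.1, x.2⟩, (hleftN x.1.1 x.2).mp x.1.2⟩
  fA := fun a => ⟨μ0.fA ⟨a.1.1, a.2⟩, (hleftA a.1.1 a.2).mp a.1.2⟩
  src_comm := fun a => Subtype.ext (μ0.src_comm ⟨a.1.1, a.2⟩)
  tgt_comm := fun a => Subtype.ext (μ0.tgt_comm ⟨a.1.1, a.2⟩)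

/-! Graphs are presheaves, so the cube can be analysed separately on nodes and on arrows,
where it becomes a cube in `Set`: the bottom pushout is `T + (X ∖ L₀)` with `T ⊆ S₀`,
`X ⊆ X₀`, the top one is `S₀ + (X₀ ∖ L₀)`, and a map commuting with the cube must be the
sum of the two inclusions, because the pushout maps are the identity off `L₀`. That sum is
injective, and an element of `X₀` whose image in the top pushout comes from the bottom one
lies in `X`: off `L₀` trivially, on `L₀` because the left face is a pullback. -/

section PushoutOfSets

open Classical in
noncomputable def pushoutMap {X S : Type*} (L : Set X) (f : L → S) (x : X) :
    S ⊕ {x // x ∉ L} :=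
  if h : x ∈ L then .inl (f ⟨x, h⟩) else .inr ⟨x, h⟩

theorem pushoutMap_of_mem {X S : Type*} {L : Set X} (f : L → S) {x : X} (h : x ∈ L) :
    pushoutMap L f x = .inl (f ⟨x, h⟩) :=
  dif_pos h

theorem pushoutMap_of_notMem {X S : Type*} {L : Set X} (f : L → S) {x : X} (h : x ∉ L) :
    pushoutMap L f x = .inr ⟨x, h⟩ :=
  dif_neg h

variable {X₀ S₀ : Type*} {L₀ X : Set X₀} {T : Set S₀}

/-- Comparison of the pushouts of `X ∩ L₀ ↪ X` and of `L₀ ↪ X₀` for `T ⊆ S₀`, `X ⊆ X₀`. -/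
def pushoutIncl : T ⊕ {x : X // x ∉ Subtype.val ⁻¹' L₀} → S₀ ⊕ {x // x ∉ L₀} :=
  Sum.map Subtype.val fun x => ⟨x.1.1, x.2⟩

theorem pushoutIncl_injective :
    Function.Injective (pushoutIncl : T ⊕ {x : X // x ∉ Subtype.val ⁻¹' L₀} → _) :=
  Sum.map_injective.2
    ⟨Subtype.val_injective, fun _ _ h => by simpa [Subtype.ext_iff] using h⟩

theorem exists_eq_inl_of_pushoutIncl_eq_inl {d : T ⊕ {x : X // x ∉ Subtype.val ⁻¹' L₀}}
    {s : S₀} (h : pushoutIncl d = .inl s) : ∃ hs : s ∈ T, d = .inl ⟨s, hs⟩ := by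
  rcases d with t | _
  · obtain rfl : t.1 = s := Sum.inl_injective h
    exact ⟨t.2, rfl⟩
  · cases h

variable (μ₀ : L₀ → S₀) (μ : (Subtype.val ⁻¹' L₀ : Set X) → T)

theorem pushoutIncl_pushoutMap (hμ : ∀ x, (μ x : S₀) = μ₀ ⟨x.1.1, x.2⟩) (x : X) :
    pushoutIncl (pushoutMap _ μ x) = pushoutMap L₀ μ₀ x := by
  by_cases h : x.1 ∈ L₀
  · rw [pushoutMap_of_mem μ (show x ∈ Subtype.val ⁻¹' L₀ from h), pushoutMap_of_mem μ₀ h]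
    exact congrArg Sum.inl (hμ _)
  · rw [pushoutMap_of_notMem μ (show x ∉ Subtype.val ⁻¹' L₀ from h), pushoutMap_of_notMem μ₀ h]
    rfl

theorem eq_pushoutIncl (m : T ⊕ {x : X // x ∉ Subtype.val ⁻¹' L₀} → S₀ ⊕ {x // x ∉ L₀})
    (hinl : ∀ s, m (.inl s) = .inl s.1)
    (hmap : ∀ x, m (pushoutMap _ μ x) = pushoutMap L₀ μ₀ x) :
    m = pushoutIncl := by
  funext d
  rcases d with s | ⟨x, hx⟩
  · exact hinl s
  · have h := hmap x
    rwa [pushoutMap_of_notMem μ hx, pushoutMap_of_notMem μ₀ hx] at h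

theorem exists_eq_pushoutMap_of_pushoutIncl_eq (hμ : ∀ x, (μ x : S₀) = μ₀ ⟨x.1.1, x.2⟩)
    (hpb : ∀ x (hx : x ∈ L₀), μ₀ ⟨x, hx⟩ ∈ T → x ∈ X)
    {d : T ⊕ {x : X // x ∉ Subtype.val ⁻¹' L₀}} {x : X₀}
    (h : pushoutIncl d = pushoutMap L₀ μ₀ x) :
    ∃ hx : x ∈ X, d = pushoutMap _ μ ⟨x, hx⟩ := by
  have hx : x ∈ X := by
    by_cases hL : x ∈ L₀
    · obtain ⟨hT, -⟩ := exists_eq_inl_of_pushoutIncl_eq_inl (h.trans (pushoutMap_of_mem μ₀ hL))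
      exact hpb x hL hT
    · rw [pushoutMap_of_notMem μ₀ hL] at h
      rcases d with _ | y
      · cases h
      · obtain rfl : y.1.1 = x := congrArg Subtype.val (Sum.inr_injective h)
        exact y.1.2
  refine ⟨hx, pushoutIncl_injective ?_⟩
  rw [h, pushoutIncl_pushoutMap μ₀ μ hμ]

end PushoutOfSets

attribute [ext] GraphHom

def mediatingHom :
    GraphHom
      (Push (Subgraph.toGraph Ii) (liftL I0 Lsub Ii) (Subgraph.toGraph Sfi)
        (μi I0 Lsub Ii S0 μ0 Sfi hleftN hleftA))
      (Push I0 Lsub S0 μ0) where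
  fN := pushoutIncl
  fA := pushoutIncl
  src_comm
    | .inl _ => rfl
    | .inr a => (pushoutIncl_pushoutMap μ0.fN (μi I0 Lsub Ii S0 μ0 Sfi hleftN hleftA).fN
        (fun _ => rfl) ((Subgraph.toGraph Ii).src a.1)).symm
  tgt_comm
    | .inl _ => rfl
    | .inr a => (pushoutIncl_pushoutMap μ0.fN (μi I0 Lsub Ii S0 μ0 Sfi hleftN hleftA).fN
        (fun _ => rfl) ((Subgraph.toGraph Ii).tgt a.1)).symm

def IsMediatingHom (m : GraphHom
      (Push (Subgraph.toGraph Ii) (liftL I0 Lsub Ii) (Subgraph.toGraph Sfi)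
        (μi I0 Lsub Ii S0 μ0 Sfi hleftN hleftA))
      (Push I0 Lsub S0 μ0)) : Prop :=
  (∀ s : (Subgraph.toGraph Sfi).N,
    m.fN ((pushInl _ _ _ (μi I0 Lsub Ii S0 μ0 Sfi hleftN hleftA)).fN s) =
      (pushInl I0 Lsub S0 μ0).fN s.1) ∧
  (∀ s : (Subgraph.toGraph Sfi).A,
    m.fA ((pushInl _ _ _ (μi I0 Lsub Ii S0 μ0 Sfi hleftN hleftA)).fA s) =
      (pushInl I0 Lsub S0 μ0).fA s.1) ∧
  (∀ x : (Subgraph.toGraph Ii).N,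
    m.fN ((pushMap _ _ _ (μi I0 Lsub Ii S0 μ0 Sfi hleftN hleftA)).fN x) =
      (pushMap I0 Lsub S0 μ0).fN x.1) ∧
  (∀ x : (Subgraph.toGraph Ii).A,
    m.fA ((pushMap _ _ _ (μi I0 Lsub Ii S0 μ0 Sfi hleftN hleftA)).fA x) =
      (pushMap I0 Lsub S0 μ0).fA x.1)

theorem mediatingHom_isMediatingHom :
    IsMediatingHom I0 Lsub Ii S0 μ0 Sfi hleftN hleftA
      (mediatingHom I0 Lsub Ii S0 μ0 Sfi hleftN hleftA) :=
  ⟨fun _ => rfl, fun _ => rfl,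
    pushoutIncl_pushoutMap μ0.fN (μi I0 Lsub Ii S0 μ0 Sfi hleftN hleftA).fN fun _ => rfl,
    pushoutIncl_pushoutMap μ0.fA (μi I0 Lsub Ii S0 μ0 Sfi hleftN hleftA).fA fun _ => rfl⟩

theorem IsMediatingHom.eq_mediatingHom {m : GraphHom
      (Push (Subgraph.toGraph Ii) (liftL I0 Lsub Ii) (Subgraph.toGraph Sfi)
        (μi I0 Lsub Ii S0 μ0 Sfi hleftN hleftA))
      (Push I0 Lsub S0 μ0)}
    (hm : IsMediatingHom I0 Lsub Ii S0 μ0 Sfi hleftN hleftA m) :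
    m = mediatingHom I0 Lsub Ii S0 μ0 Sfi hleftN hleftA :=
  GraphHom.ext (eq_pushoutIncl μ0.fN _ m.fN hm.1 hm.2.2.1)
    (eq_pushoutIncl μ0.fA _ m.fA hm.2.1 hm.2.2.2)

/-- In the commutative cube whose top and bottom squares are the
pushouts `D_0 = S_0 + (I_0 ∖ L_0)` and `D_{f(i)} = S_{f(i)} + (I_i ∖ L_i)` and
whose back and left squares are pullbacks, the unique mediating morphism
`D_{f(i)} → D_0` induced by the universal property of the bottom pushout makes
the front and right squares pullbacks, and it is itself an inclusion, namely
the sum of the inclusions `S_{f(i)} ↪ S_0` and `(I_i ∖ L_i) ↪ (I_0 ∖ L_0)`. -/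
theorem mediating_morphism_cube :
    (∃! m : GraphHom
        (Push (Subgraph.toGraph Ii) (liftL I0 Lsub Ii) (Subgraph.toGraph Sfi)
          (μi I0 Lsub Ii S0 μ0 Sfi hleftN hleftA))
        (Push I0 Lsub S0 μ0),
      (∀ s : (Subgraph.toGraph Sfi).N,
        m.fN ((pushInl _ _ _ (μi I0 Lsub Ii S0 μ0 Sfi hleftN hleftA)).fN s) =
          (pushInl I0 Lsub S0 μ0).fN s.1) ∧
      (∀ s : (Subgraph.toGraph Sfi).A,
        m.fA ((pushInl _ _ _ (μi I0 Lsub Ii S0 μ0 Sfi hleftN hleftA)).fA s) =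
          (pushInl I0 Lsub S0 μ0).fA s.1) ∧
      (∀ x : (Subgraph.toGraph Ii).N,
        m.fN ((pushMap _ _ _ (μi I0 Lsub Ii S0 μ0 Sfi hleftN hleftA)).fN x) =
          (pushMap I0 Lsub S0 μ0).fN x.1) ∧
      (∀ x : (Subgraph.toGraph Ii).A,
        m.fA ((pushMap _ _ _ (μi I0 Lsub Ii S0 μ0 Sfi hleftN hleftA)).fA x) =
          (pushMap I0 Lsub S0 μ0).fA x.1)) ∧
    (∀ m : GraphHom
        (Push (Subgraph.toGraph Ii) (liftL I0 Lsub Ii) (Subgraph.toGraph Sfi)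
          (μi I0 Lsub Ii S0 μ0 Sfi hleftN hleftA))
        (Push I0 Lsub S0 μ0),
      ((∀ s : (Subgraph.toGraph Sfi).N,
        m.fN ((pushInl _ _ _ (μi I0 Lsub Ii S0 μ0 Sfi hleftN hleftA)).fN s) =
          (pushInl I0 Lsub S0 μ0).fN s.1) ∧
      (∀ s : (Subgraph.toGraph Sfi).A,
        m.fA ((pushInl _ _ _ (μi I0 Lsub Ii S0 μ0 Sfi hleftN hleftA)).fA s) =
          (pushInl I0 Lsub S0 μ0).fA s.1) ∧
      (∀ x : (Subgraph.toGraph Ii).N,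
        m.fN ((pushMap _ _ _ (μi I0 Lsub Ii S0 μ0 Sfi hleftN hleftA)).fN x) =
          (pushMap I0 Lsub S0 μ0).fN x.1) ∧
      (∀ x : (Subgraph.toGraph Ii).A,
        m.fA ((pushMap _ _ _ (μi I0 Lsub Ii S0 μ0 Sfi hleftN hleftA)).fA x) =
          (pushMap I0 Lsub S0 μ0).fA x.1)) →
      -- the mediating morphism is a sum of inclusions, in particular injective
      (Function.Injective m.fN ∧ Function.Injective m.fA ∧
       (∀ (x : (Subgraph.toGraph Ii).N) (hx : x ∉ (liftL I0 Lsub Ii).nodes),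
         m.fN (Sum.inr ⟨x, hx⟩) = Sum.inr ⟨x.1, hx⟩) ∧
       (∀ (a : (Subgraph.toGraph Ii).A) (ha : a ∉ (liftL I0 Lsub Ii).arrows),
         m.fA (Sum.inr ⟨a, ha⟩) = Sum.inr ⟨a.1, ha⟩) ∧
       -- the front square is a pullback
       (∀ (s : S0.N) d, m.fN d = (pushInl I0 Lsub S0 μ0).fN s →
         ∃ h : s ∈ Sfi.nodes,
           d = (pushInl _ _ _ (μi I0 Lsub Ii S0 μ0 Sfi hleftN hleftA)).fN ⟨s, h⟩) ∧
       (∀ (s : S0.A) d, m.fA d = (pushInl I0 Lsub S0 μ0).fA s →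
         ∃ h : s ∈ Sfi.arrows,
           d = (pushInl _ _ _ (μi I0 Lsub Ii S0 μ0 Sfi hleftN hleftA)).fA ⟨s, h⟩) ∧
       -- the right square is a pullback
       (∀ (x : I0.N) d, m.fN d = (pushMap I0 Lsub S0 μ0).fN x →
         ∃ h : x ∈ Ii.nodes,
           d = (pushMap _ _ _ (μi I0 Lsub Ii S0 μ0 Sfi hleftN hleftA)).fN ⟨x, h⟩) ∧
       (∀ (x : I0.A) d, m.fA d = (pushMap I0 Lsub S0 μ0).fA x →
         ∃ h : x ∈ Ii.arrows,
           d = (pushMap _ _ _ (μi I0 Lsub Ii S0 μ0 Sfi hleftN hleftA)).fA ⟨x, h⟩))) := by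
  have hunique := fun m =>
    IsMediatingHom.eq_mediatingHom (m := m) I0 Lsub Ii S0 μ0 Sfi hleftN hleftA
  refine ⟨⟨_, mediatingHom_isMediatingHom I0 Lsub Ii S0 μ0 Sfi hleftN hleftA, hunique⟩,
    fun m hm => ?_⟩
  obtain rfl := hunique m hm
  exact ⟨pushoutIncl_injective, pushoutIncl_injective, fun _ _ => rfl, fun _ _ => rfl,
    fun _ _ => exists_eq_inl_of_pushoutIncl_eq_inl,
    fun _ _ => exists_eq_inl_of_pushoutIncl_eq_inl,
    fun _ _ => exists_eq_pushoutMap_of_pushoutIncl_eq μ0.fN _ (fun _ => rfl)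
      fun x hx => (hleftN x hx).2,
    fun _ _ => exists_eq_pushoutMap_of_pushoutIncl_eq μ0.fA _ (fun _ => rfl)
      fun x hx => (hleftA x hx).2⟩

end Cube
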